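/- If w0 ≤ w1 (in the pawn-move partial order on words in {x,y} with equal letter counts), then for any creation operator a*_{s,i} (which inserts a letter s at a specified place relative to the i-th occurrence of s, including initial and final insertions), a*_{s,i} w0 ≤ a*_{s,i} w1; moreover the converse holds: a*_{s,i} w0 ≤ a*_{s,i} w1 implies w0 ≤ w1. -/

import Mathlib

open scoped Classical

/-- Words over the two-letter alphabet {x,y}; `false` is `x`, `true` is `y`. -/
abbrev Word := List Bool

/-- 0-indexed positions of the x's (`false`) in a word. -/
def xIdx (w : Word) : List ℕ :=
  (List.range w.length).filter (fun j => w.getD j true = false)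

/-- 0-indexed positions of the y's (`true`) in a word. -/
def yIdx (w : Word) : List ℕ :=
  (List.range w.length).filter (fun j => w.getD j false = true)

/-- `fX w i` = number of y's strictly left of the i-th x of `w` (i is 0-indexed). -/
def fX (w : Word) (i : ℕ) : ℕ := (xIdx w).getD i 0 - i

/-- `fY w j` = number of x's strictly left of the j-th y of `w` (j is 0-indexed). -/
def fY (w : Word) (j : ℕ) : ℕ := (yIdx w).getD j 0 - j

/-- `hX w i` = (1-indexed) position of the i-th x of `w` (i is 0-indexed). -/
def hX (w : Word) (i : ℕ) : ℕ := (xIdx w).getD i 0 + 1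

/-- The pawn-move partial order: same letter counts, and each x of `w0` lies at a
position at most that of the corresponding x of `w1`. -/
def wle (w0 w1 : Word) : Prop :=
  w0.count false = w1.count false ∧ w0.count true = w1.count true ∧
  ∀ i < w0.count false, (xIdx w0).getD i 0 ≤ (xIdx w1).getD i 0

/-- Creation operator `a*_{s,i}` on words: `i = 0` prepends `s`; `1 ≤ i ≤ n_s`
replaces the i-th `s` by `ss`; `i = n_s + 1` appends `s`. -/
def create (s : Bool) : ℕ → Word → Word
  | 0, w => s :: w
  | _+1, [] => [s]
  | i+1, a :: w =>
    if a = s then (if i = 0 then s :: s :: w else a :: create s i w)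
    else a :: create s (i+1) w

/-- Delete the i-th occurrence (1-indexed) of `s`. -/
def delNth (s : Bool) : ℕ → Word → Word
  | _, [] => []
  | i, a :: w => if a = s then (if i ≤ 1 then w else a :: delNth s (i-1) w)
                 else a :: delNth s i w

/-- Annihilation operator `a_{s,i}` on words: `i = 0` deletes an initial `s` (else 0);
`1 ≤ i ≤ n_s` deletes the i-th `s`; `i = n_s + 1` deletes a final `s` (else 0). -/
def annih (s : Bool) (i : ℕ) (w : Word) : Option Word :=
  if i = 0 then
    match w with
    | a :: t => if a = s then some t else none
    | [] => none
  else if i ≤ w.count s then some (delNth s i w)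
  else if i = w.count s + 1 then
    if w.getLast? = some s then some w.dropLast else none
  else none

/-- The free ℤ-module on words: the Fock space `F`. -/
abbrev FS := Word →₀ ℤ

/-- Basis vector of a word. -/
noncomputable def δ (w : Word) : FS := Finsupp.single w 1

/-- `0` for `none`, basis vector for `some`. -/
noncomputable def optδ (o : Option Word) : FS := o.elim 0 δ

/-- Extend a word-indexed family of vectors to a linear map on `FS`. -/
noncomputable def opOf (g : Word → FS) : FS →ₗ[ℤ] FS := Finsupp.lift FS ℤ Word g

/-- Creation operator as a linear map. -/
noncomputable def Cr (s : Bool) (i : ℕ) : FS →ₗ[ℤ] FS := opOf (fun w => δ (create s i w))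

/-- Annihilation operator as a linear map. -/
noncomputable def An (s : Bool) (i : ℕ) : FS →ₗ[ℤ] FS := opOf (fun w => optδ (annih s i w))

/-- Boolean bilinear form on words: `1` if `w0 ≤ w1` in the pawn-move order, else `0`. -/
noncomputable def pairW (w0 w1 : Word) : ℤ := if wle w0 w1 then 1 else 0

/-- Bilinear extension of `pairW` to the free module. -/
noncomputable def pairF (u v : FS) : ℤ :=
  u.sum fun w0 a => v.sum fun w1 b => a * b * pairW w0 w1

/-- Kronecker delta form on words. -/
noncomputable def dotW (w0 w1 : Word) : ℤ := if w0 = w1 then 1 else 0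

/-- Bilinear extension of `dotW`: words form an orthonormal basis. -/
noncomputable def dotF (u v : FS) : ℤ :=
  u.sum fun w0 a => v.sum fun w1 b => a * b * dotW w0 w1

/-- All words of a given length. -/
noncomputable def wordsOfLen (n : ℕ) : Finset Word :=
  (Finset.univ : Finset (Fin n → Bool)).image List.ofFn

/-- Swap `xy → yx` at the x's whose (0-indexed) number lies in `T`;
the counter `k` records how many x's have been passed. -/
def psiX (T : Finset ℕ) : Word → ℕ → Word
  | [], _ => []
  | false :: true :: w, k =>
      if k ∈ T then true :: false :: psiX T w (k+1)
      else false :: psiX T (true :: w) (k+1)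
  | false :: w, k => false :: psiX T w (k+1)
  | true :: w, k => true :: psiX T w k
  termination_by w _ => w.length
  decreasing_by all_goals (simp <;> omega)

/-- Swap `yx → xy` at the y's whose (0-indexed) number lies in `T`. -/
def psiY (T : Finset ℕ) : Word → ℕ → Word
  | [], _ => []
  | true :: false :: w, k =>
      if k ∈ T then false :: true :: psiY T w (k+1)
      else true :: psiY T (false :: w) (k+1)
  | true :: w, k => true :: psiY T w (k+1)
  | false :: w, k => false :: psiY T w k
  termination_by w _ => w.length
  decreasing_by all_goals (simp <;> omega)

/-- `Ex w`: 0-indexed numbers of the x's of `w` immediately followed by a y. -/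
noncomputable def Ex (w : Word) : Finset ℕ :=
  (Finset.range (w.count false)).filter
    (fun i => w.getD ((xIdx w).getD i 0 + 1) false = true)

/-- `Ey w`: 0-indexed numbers of the y's of `w` immediately followed by an x. -/
noncomputable def Ey (w : Word) : Finset ℕ :=
  (Finset.range (w.count true)).filter
    (fun i => w.getD ((yIdx w).getD i 0 + 1) true = false)

/-!
Read `u ≤ v` through prefix counts: the i-th x of `u` is no further right than the i-th x of `v`
for every i iff every prefix of `u` holds at least as many x's as the prefix of `v` of the same
length, equivalently at most as many y's. So for either letter `s` it suffices that inserting `s`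
by `a*_{s,i}` preserves and reflects this domination in the letter `s`. For `i ≤ n_s` the letter
is inserted at the first position `t` where the prefix holds `i` letters `s`; domination forces
`t_u ≤ t_v`, and between the two positions the counts are pinned by the threshold `i`.
For larger `i` the letter is appended to both words, which have the same length.
-/

theorem xIdx_cons (a : Bool) (w : Word) :
    xIdx (a :: w) = if a = false then 0 :: (xIdx w).map (· + 1) else (xIdx w).map (· + 1) := by
  simp only [xIdx, List.length_cons, List.range_succ_eq_map, List.filter_cons, List.filter_map]
  cases a <;> simp [Function.comp_def]

theorem length_xIdx (w : Word) : (xIdx w).length = w.count false := by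
  induction w with
  | nil => rfl
  | cons a w ih => cases a <;> simp [xIdx_cons, ih]

theorem getD_xIdx_lt_iff (w : Word) {k : ℕ} (hk : k < w.count false) (p : ℕ) :
    (xIdx w).getD k 0 < p ↔ k < (w.take p).count false := by
  induction w generalizing k p with
  | nil => simp at hk
  | cons a w ih =>
    have getD_map_succ : ∀ {j}, j < w.count false →
        ((xIdx w).map (· + 1)).getD j 0 = (xIdx w).getD j 0 + 1 := fun hj => by
      simp [List.getD_eq_getElem?_getD, List.getElem?_eq_getElem (length_xIdx w ▸ hj)]
    cases p with
    | zero => simp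
    | succ p =>
      cases a
      · cases k with
        | zero => simp [xIdx_cons]
        | succ k =>
          have hk' : k < w.count false := by simpa using hk
          rw [xIdx_cons, if_pos rfl, List.getD_cons_succ, getD_map_succ hk', List.take_succ_cons,
            List.count_cons_self, Nat.add_lt_add_iff_right, Nat.add_lt_add_iff_right, ih hk']
      · have hk' : k < w.count false := by simpa using hk
        rw [xIdx_cons, if_neg Bool.true_eq_false.mp, getD_map_succ hk', List.take_succ_cons,
          List.count_cons_of_ne Bool.true_eq_false.mp, Nat.add_lt_add_iff_right, ih hk']

def Dominates (c : Bool) (u v : Word) : Prop :=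
  ∀ p, (v.take p).count c ≤ (u.take p).count c

theorem wle_iff_dominates_false (u v : Word) :
    wle u v ↔ u.count false = v.count false ∧ u.count true = v.count true ∧
      Dominates false u v := by
  refine and_congr_right fun hx => and_congr_right fun _ =>
    ⟨fun hle p => ?_, fun hdom k hk => ?_⟩
  · by_contra! hlt
    set k := (u.take p).count false
    have hkv : k < v.count false := hlt.trans_le ((List.take_sublist p v).count_le false)
    have hku : (xIdx u).getD k 0 < p :=
      (hle k (hx ▸ hkv)).trans_lt ((getD_xIdx_lt_iff v hkv p).mpr hlt)
    exact lt_irrefl k ((getD_xIdx_lt_iff u (hx ▸ hkv) p).mp hku)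
  · have hkv : k < (v.take ((xIdx v).getD k 0 + 1)).count false :=
      (getD_xIdx_lt_iff v (hx ▸ hk) _).mp (Nat.lt_succ_self _)
    exact Nat.le_of_lt_succ ((getD_xIdx_lt_iff u hk _).mpr (hkv.trans_le (hdom _)))

theorem dominates_iff_dominates_not {c : Bool} {u v : Word} (hlen : u.length = v.length) :
    Dominates c u v ↔ Dominates (!c) v u := by
  refine forall_congr' fun p => ?_
  have hu := List.count_true_add_count_false (u.take p)
  have hv := List.count_true_add_count_false (v.take p)
  simp only [List.length_take, hlen] at hu hv
  cases c <;> simp only [Bool.not_false, Bool.not_true] <;> omega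

theorem length_eq_of_count_eq {u v : Word} (hx : u.count false = v.count false)
    (hy : u.count true = v.count true) : u.length = v.length := by
  rw [← List.count_true_add_count_false, ← List.count_true_add_count_false, hx, hy]

theorem wle_iff_dominates_true (u v : Word) :
    wle u v ↔ u.count false = v.count false ∧ u.count true = v.count true ∧
      Dominates true v u := by
  rw [wle_iff_dominates_false]
  exact and_congr_right fun hx => and_congr_right fun hy =>
    dominates_iff_dominates_not (length_eq_of_count_eq hx hy)

theorem List.count_take_succ_le {α : Type*} [BEq α] (l : List α) (a : α) (p : ℕ) :
    (l.take (p + 1)).count a ≤ (l.take p).count a + 1 := by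
  rw [List.take_add_one, List.count_append]
  have : l[p]?.toList.length ≤ 1 := by cases l[p]? <;> simp
  have := List.count_le_length (a := a) (l := l[p]?.toList)
  omega

theorem List.count_take_succ_insertIdx {α : Type*} [BEq α] [LawfulBEq α] {l : List α} (a : α)
    {t q : ℕ} (ht : t ≤ l.length) (hq : t ≤ q) :
    ((l.insertIdx t a).take (q + 1)).count a = (l.take q).count a + 1 := by
  induction t generalizing l q with
  | zero => simp
  | succ t ih =>
    obtain ⟨b, l, rfl⟩ : ∃ b l', l = b :: l' := List.exists_cons_of_length_pos (by omega)
    obtain ⟨q, rfl⟩ : ∃ q', q = q' + 1 := ⟨q - 1, by omega⟩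
    simp only [List.insertIdx_succ_cons, List.take_succ_cons, List.count_cons]
    rw [ih (by simpa using ht) (by omega)]
    omega

theorem dominates_insertIdx_iff {s : Bool} {u v : Word} {i tu tv : ℕ}
    (htu : tu ≤ u.length) (htv : tv ≤ v.length)
    (hu : ∀ p, i ≤ (u.take p).count s ↔ tu ≤ p) (hv : ∀ p, i ≤ (v.take p).count s ↔ tv ≤ p) :
    Dominates s u v ↔ Dominates s (u.insertIdx tu s) (v.insertIdx tv s) := by
  constructor
  · intro hdom p
    have htle : tu ≤ tv := (hu tv).mp (((hv tv).mpr le_rfl).trans (hdom tv))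
    rcases le_or_gt p tu with hpu | hpu
    · rw [List.take_insertIdx_eq_take_of_le _ _ _ _ hpu,
        List.take_insertIdx_eq_take_of_le _ _ _ _ (hpu.trans htle)]
      exact hdom p
    obtain ⟨q, rfl⟩ : ∃ q, p = q + 1 := ⟨p - 1, by omega⟩
    rw [List.count_take_succ_insertIdx s htu (by omega)]
    rcases le_or_gt tv q with hqv | hqv
    · rw [List.count_take_succ_insertIdx s htv hqv]
      exact Nat.add_le_add_right (hdom q) 1
    · rw [List.take_insertIdx_eq_take_of_le _ _ _ _ hqv]
      exact (List.count_take_succ_le v s q).trans (Nat.add_le_add_right (hdom q) 1)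
  · intro hdom p
    rcases le_or_gt p tu with hpu | hpu <;>
      rcases le_or_gt p tv with hpv | hpv
    · simpa only [List.take_insertIdx_eq_take_of_le _ _ _ _ hpu,
        List.take_insertIdx_eq_take_of_le _ _ _ _ hpv] using hdom p
    · have h := hdom p
      obtain ⟨q, rfl⟩ : ∃ q, p = q + 1 := ⟨p - 1, by omega⟩
      rw [List.take_insertIdx_eq_take_of_le _ _ _ _ hpu,
        List.count_take_succ_insertIdx s htv (by omega)] at h
      have := List.count_take_succ_le v s q
      omega
    · -- the threshold: `u` has reached `i` letters `s` by `p`, `v` had not by `p - 1`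
      obtain ⟨q, rfl⟩ : ∃ q, p = q + 1 := ⟨p - 1, by omega⟩
      have hui := (hu (q + 1)).mpr hpu.le
      have hvi := (hv q).not.mpr (by omega)
      have := List.count_take_succ_le v s q
      omega
    · have h := hdom (p + 1)
      rw [List.count_take_succ_insertIdx s htu hpu.le,
        List.count_take_succ_insertIdx s htv hpv.le] at h
      omega

theorem dominates_append_iff {c : Bool} {u v : Word} (w : Word) (hlen : u.length = v.length) :
    Dominates c (u ++ w) (v ++ w) ↔ Dominates c u v :=
  forall_congr' fun p => by
    simp only [List.take_append, List.count_append, hlen, Nat.add_le_add_iff_right]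

theorem create_eq_append_of_count_lt {s : Bool} {i : ℕ} {w : Word} (h : w.count s < i) :
    create s i w = w ++ [s] := by
  induction w generalizing i with
  | nil => obtain ⟨j, rfl⟩ : ∃ j, i = j + 1 := ⟨i - 1, by simp at h; omega⟩; rfl
  | cons a w ih =>
    obtain ⟨j, rfl⟩ : ∃ j, i = j + 1 := ⟨i - 1, by omega⟩
    by_cases ha : a = s
    · subst ha
      rw [List.count_cons_self] at h
      simp [create, show j ≠ 0 by omega, ih (show w.count a < j by omega)]
    · rw [List.count_cons_of_ne ha] at h
      simp [create, ha, ih h]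

theorem exists_create_eq_insertIdx {s : Bool} {i : ℕ} {w : Word} (h : i ≤ w.count s) :
    ∃ t ≤ w.length, create s i w = w.insertIdx t s ∧
      ∀ p, i ≤ (w.take p).count s ↔ t ≤ p := by
  induction w generalizing i with
  | nil =>
    obtain rfl : i = 0 := by simpa using h
    exact ⟨0, le_rfl, rfl, by simp⟩
  | cons a w ih =>
    cases i with
    | zero => exact ⟨0, Nat.zero_le _, rfl, by simp⟩
    | succ j =>
      by_cases ha : a = s
      · subst ha
        rw [List.count_cons_self] at h
        obtain ⟨t, ht, hcreate, hthr⟩ := ih (show j ≤ w.count a by omega)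
        have hcons : create a (j + 1) (a :: w) = a :: create a j w := by
          cases j <;> simp [create]
        refine ⟨t + 1, by simpa using ht, by rw [hcons, hcreate]; rfl, fun p => ?_⟩
        cases p <;> simp [hthr]
      · rw [List.count_cons_of_ne ha] at h
        obtain ⟨t, ht, hcreate, hthr⟩ := ih h
        refine ⟨t + 1, by simpa using ht, by simp [create, ha, hcreate], fun p => ?_⟩
        cases p <;> simp [ha, hthr]

theorem create_perm (s : Bool) (i : ℕ) (w : Word) : (create s i w).Perm (s :: w) := by
  rcases le_or_gt i (w.count s) with h | h
  · obtain ⟨t, ht, hcreate, -⟩ := exists_create_eq_insertIdx h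
    exact hcreate ▸ List.perm_insertIdx s w ht
  · exact create_eq_append_of_count_lt h ▸ List.perm_append_singleton s w

theorem dominates_create_iff {s : Bool} {i : ℕ} {u v : Word} (hcount : u.count s = v.count s)
    (hlen : u.length = v.length) :
    Dominates s u v ↔ Dominates s (create s i u) (create s i v) := by
  rcases le_or_gt i (u.count s) with hi | hi
  · obtain ⟨tu, htu, hcu, hu⟩ := exists_create_eq_insertIdx hi
    obtain ⟨tv, htv, hcv, hv⟩ := exists_create_eq_insertIdx (hcount ▸ hi)
    rw [hcu, hcv]
    exact dominates_insertIdx_iff htu htv hu hv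
  · rw [create_eq_append_of_count_lt hi, create_eq_append_of_count_lt (hcount ▸ hi),
      dominates_append_iff _ hlen]

theorem stmt2_general (s : Bool) (i : ℕ) (w0 w1 : Word) :
    wle w0 w1 ↔ wle (create s i w0) (create s i w1) := by
  have hcount : ∀ c, (create s i w0).count c = (create s i w1).count c ↔
      w0.count c = w1.count c := fun c => by
    simp only [(create_perm s i _).count_eq, List.count_cons, Nat.add_right_cancel_iff]
  cases s
  · rw [wle_iff_dominates_false, wle_iff_dominates_false, hcount, hcount]
    exact and_congr_right fun hx => and_congr_right fun hy =>
      dominates_create_iff hx (length_eq_of_count_eq hx hy)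
  · rw [wle_iff_dominates_true, wle_iff_dominates_true, hcount, hcount]
    exact and_congr_right fun hx => and_congr_right fun hy =>
      dominates_create_iff hy.symm (length_eq_of_count_eq hx hy).symm

/-- Creation operators preserve the pawn-move order, and conversely:
for a valid index `i`, `w0 ≤ w1` iff `a*_{s,i} w0 ≤ a*_{s,i} w1`. -/
theorem stmt2 (s : Bool) (i : ℕ) (w0 w1 : Word)
    (h0 : i ≤ w0.count s + 1) (h1 : i ≤ w1.count s + 1) :
    wle w0 w1 ↔ wle (create s i w0) (create s i w1) :=
  stmt2_general s i w0 w1
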